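/- arXiv:1606.05079 — 3 statements merged into one kernel-verified Lean document; each statement's English description precedes it below -/
import Mathlib

section
/- Consider the deterministic liquidation problem with zero discount rate, zero temporary impact, zero terminal liquidation value, unit initial price, and linear permanent impact with constant drift $\overline{\eta}(\nu) = \theta(c^{\text{up}} - c^{\text{down}}(1+a\nu))$ where $c^{\text{up}} < c^{\text{down}}$. The candidate value function $V'(t,w) = \frac{\nu^{\max}}{\overline{\eta}(\nu^{\max})}\left(e^{\overline{\eta}(\nu^{\max})(\tau(w)\wedge(T-t))} - 1\right)$ with $\tau(w) = w/\nu^{\max}$ is continuously differentiable on $([0,T]\times[0,w_0]) \setminus G$, where $G = \{(t,w): w/\nu^{\max} = T-t\}$, and is a classical solution of the HJB equation $-\partial_t V' - \sup_{\nu \in [0,\nu^{\max}]}\{\nu - \nu\,\partial_w V' + \overline{\eta}(\nu) V'\} = 0$ there, but $V'$ fails to be differentiable on $G$. -/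
open Real Set Filter Topology

/-!
Selling at the maximal rate `ν` for a time `s` earns `g(s) = ∫₀ˢ ν e^{K r} dr` with
`K = η̄(ν^max) < 0`, and `V'(t, w) = g(min (w / ν) (T - t))`. Off `G` the minimum is locally
one of its two smooth arguments. There the Hamiltonian is affine in the selling rate with
nonnegative slope, so its supremum is attained at `ν^max` and equals `-∂ₜV'`. On `G` the time
section of `V'` is constant to the left and has slope `-ν e^{K(T-t)} < 0` to the right.
-/

namespace OptimalLiquidation

lemma drift_neg {θ a cup cdown ν : ℝ} (hθ : 0 < θ) (ha : 0 ≤ a) (hcup : 0 ≤ cup)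
    (hcc : cup < cdown) (hν : 0 ≤ ν) : θ * (cup - cdown * (1 + a * ν)) < 0 := by
  have : 0 ≤ cdown * (a * ν) := mul_nonneg (hcup.trans hcc.le) (mul_nonneg ha hν)
  exact mul_neg_of_pos_of_neg hθ (by linarith)

lemma min_eventuallyEq_left {X α : Type*} [TopologicalSpace X] [TopologicalSpace α]
    [LinearOrder α] [OrderClosedTopology α] {u v : X → α} {x : X}
    (hu : ContinuousAt u x) (hv : ContinuousAt v x) (h : u x < v x) :
    (fun y => min (u y) (v y)) =ᶠ[𝓝 x] u :=
  (hu.eventually_lt hv h).mono fun _ hy => min_eq_left hy.le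

lemma min_eventuallyEq_right {X α : Type*} [TopologicalSpace X] [TopologicalSpace α]
    [LinearOrder α] [OrderClosedTopology α] {u v : X → α} {x : X}
    (hu : ContinuousAt u x) (hv : ContinuousAt v x) (h : v x < u x) :
    (fun y => min (u y) (v y)) =ᶠ[𝓝 x] v :=
  (hv.eventually_lt hu h).mono fun _ hy => min_eq_right hy.le

lemma eventuallyEq_sectionFst {X Y Z : Type*} [TopologicalSpace X] [TopologicalSpace Y]
    {f g : X × Y → Z} {q : X × Y} (h : f =ᶠ[𝓝 q] g) :
    (fun x => f (x, q.2)) =ᶠ[𝓝 q.1] fun x => g (x, q.2) :=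
  h.comp_tendsto (Continuous.tendsto (by fun_prop : Continuous fun x : X => (x, q.2)) q.1)

lemma eventuallyEq_sectionSnd {X Y Z : Type*} [TopologicalSpace X] [TopologicalSpace Y]
    {f g : X × Y → Z} {q : X × Y} (h : f =ᶠ[𝓝 q] g) :
    (fun y => f (q.1, y)) =ᶠ[𝓝 q.2] fun y => g (q.1, y) :=
  h.comp_tendsto (Continuous.tendsto (by fun_prop : Continuous fun y : Y => (q.1, y)) q.2)

lemma eq_of_hasDerivWithinAt_Iic_of_hasDerivWithinAt_Ici {f : ℝ → ℝ} {x a b : ℝ}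
    (hf : DifferentiableAt ℝ f x) (ha : HasDerivWithinAt f a (Iic x) x)
    (hb : HasDerivWithinAt f b (Ici x) x) : a = b :=
  ((uniqueDiffWithinAt_Iic x).eq_deriv _ ha hf.hasDerivAt.hasDerivWithinAt).trans
    ((uniqueDiffWithinAt_Ici x).eq_deriv _ hf.hasDerivAt.hasDerivWithinAt hb)

noncomputable def sellValue (K ν s : ℝ) : ℝ := ν / K * (exp (K * s) - 1)

noncomputable def candidate (K ν T : ℝ) (p : ℝ × ℝ) : ℝ :=
  sellValue K ν (min (p.2 / ν) (T - p.1))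

variable {K ν T : ℝ}

lemma contDiff_sellValue : ContDiff ℝ 1 (sellValue K ν) := by
  unfold sellValue; fun_prop

lemma hasDerivAt_sellValue (hK : K ≠ 0) (s : ℝ) :
    HasDerivAt (sellValue K ν) (ν * exp (K * s)) s :=
  ((((hasDerivAt_id' s).const_mul K).exp.sub_const 1).const_mul (ν / K)).congr_deriv
    (by field_simp)

lemma hasDerivAt_sellValue_sub (hK : K ≠ 0) (t : ℝ) :
    HasDerivAt (fun u => sellValue K ν (T - u)) (-(ν * exp (K * (T - t)))) t :=
  (hasDerivAt_sellValue hK (T - t)).comp_const_sub T t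

variable {p : ℝ × ℝ}

lemma candidate_eventuallyEq_of_lt (h : p.2 / ν < T - p.1) :
    candidate K ν T =ᶠ[𝓝 p] fun q => sellValue K ν (q.2 / ν) :=
  (min_eventuallyEq_left (by fun_prop) (by fun_prop) h).fun_comp (sellValue K ν)

lemma candidate_eventuallyEq_of_gt (h : T - p.1 < p.2 / ν) :
    candidate K ν T =ᶠ[𝓝 p] fun q => sellValue K ν (T - q.1) :=
  (min_eventuallyEq_right (by fun_prop) (by fun_prop) h).fun_comp (sellValue K ν)

lemma contDiffAt_candidate (h : p.2 / ν ≠ T - p.1) : ContDiffAt ℝ 1 (candidate K ν T) p := by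
  rcases h.lt_or_gt with h | h
  · exact (contDiff_sellValue.comp (by fun_prop)).contDiffAt.congr_of_eventuallyEq
      (candidate_eventuallyEq_of_lt h)
  · exact (contDiff_sellValue.comp (by fun_prop)).contDiffAt.congr_of_eventuallyEq
      (candidate_eventuallyEq_of_gt h)

lemma deriv_candidate_time_of_lt (h : p.2 / ν < T - p.1) :
    deriv (fun t => candidate K ν T (t, p.2)) p.1 = 0 := by
  rw [(eventuallyEq_sectionFst (candidate_eventuallyEq_of_lt h)).deriv_eq]
  exact deriv_const p.1 (sellValue K ν (p.2 / ν))

lemma deriv_candidate_inventory_of_lt (hK : K ≠ 0) (hν : ν ≠ 0) (h : p.2 / ν < T - p.1) :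
    deriv (fun w => candidate K ν T (p.1, w)) p.2 = exp (K * (p.2 / ν)) := by
  have hsection : HasDerivAt (fun w => sellValue K ν (w / ν))
      (ν * exp (K * (p.2 / ν)) * (1 / ν)) p.2 :=
    (hasDerivAt_sellValue hK (p.2 / ν)).comp (h₂ := sellValue K ν) (h := (· / ν)) p.2
      ((hasDerivAt_id' p.2).div_const ν)
  rw [(eventuallyEq_sectionSnd (candidate_eventuallyEq_of_lt h)).deriv_eq, hsection.deriv]
  field_simp

lemma deriv_candidate_time_of_gt (hK : K ≠ 0) (h : T - p.1 < p.2 / ν) :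
    deriv (fun t => candidate K ν T (t, p.2)) p.1 = -(ν * exp (K * (T - p.1))) := by
  rw [(eventuallyEq_sectionFst (candidate_eventuallyEq_of_gt h)).deriv_eq]
  exact (hasDerivAt_sellValue_sub hK p.1).deriv

lemma deriv_candidate_inventory_of_gt (h : T - p.1 < p.2 / ν) :
    deriv (fun w => candidate K ν T (p.1, w)) p.2 = 0 := by
  rw [(eventuallyEq_sectionSnd (candidate_eventuallyEq_of_gt h)).deriv_eq]
  exact deriv_const p.2 (sellValue K ν (T - p.1))

lemma not_differentiableAt_candidate (hK : K ≠ 0) (hν : 0 < ν) (h : p.2 / ν = T - p.1) :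
    ¬ DifferentiableAt ℝ (candidate K ν T) p := by
  intro hd
  have hleft : HasDerivWithinAt (fun t => candidate K ν T (t, p.2)) 0 (Iic p.1) p.1 :=
    (hasDerivWithinAt_const _ _ (sellValue K ν (p.2 / ν))).congr_of_mem
      (fun t (ht : t ≤ p.1) => congrArg _ (min_eq_left (by linarith))) self_mem_Iic
  have hright : HasDerivWithinAt (fun t => candidate K ν T (t, p.2))
      (-(ν * exp (K * (T - p.1)))) (Ici p.1) p.1 :=
    (hasDerivAt_sellValue_sub hK p.1).hasDerivWithinAt.congr_of_mem
      (fun t (ht : p.1 ≤ t) => congrArg _ (min_eq_right (by linarith))) self_mem_Ici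
  have hsection : DifferentiableAt ℝ (fun t => candidate K ν T (t, p.2)) p.1 :=
    DifferentiableAt.comp (g := candidate K ν T) p.1 hd
      (differentiableAt_id.prodMk (differentiableAt_const _))
  have := eq_of_hasDerivWithinAt_Iic_of_hasDerivWithinAt_Ici hsection hleft hright
  exact (mul_pos hν (exp_pos _)).ne' (by linarith)

lemma sSup_hamiltonian {θ a cup cdown νmax s d : ℝ} {ηb : ℝ → ℝ}
    (hηb : ∀ νv, ηb νv = θ * (cup - cdown * (1 + a * νv)))
    (hθ : 0 < θ) (hcc : cup < cdown) (hν : 0 < νmax) (hK : ηb νmax < 0) (hs : 0 ≤ s) (hd : d ≤ exp (ηb νmax * s)) :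
    sSup ((fun νv => νv - νv * d + ηb νv * sellValue (ηb νmax) νmax s) '' Icc 0 νmax)
      = νmax * (exp (ηb νmax * s) - d) := by
  set E := exp (ηb νmax * s)
  set C := νmax / ηb νmax
  have hC : C < 0 := div_neg_of_pos_of_neg hν hK
  have hCK : C * ηb νmax = νmax := div_mul_cancel₀ _ hK.ne
  have hE : E ≤ 1 := exp_le_one_iff.2 (mul_nonpos_of_nonpos_of_nonneg hK.le hs)
  -- `νmax (1 + θ cdown a C) = C θ (cup - cdown)`, from `C K = νmax`
  have hfac : 0 ≤ 1 + θ * cdown * a * C := by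
    rw [hηb] at hCK
    have : 0 ≤ C * (cup - cdown) * θ :=
      mul_nonneg (mul_nonneg_of_nonpos_of_nonpos hC.le (by linarith)) hθ.le
    nlinarith
  have hmono : MonotoneOn (fun νv => νv - νv * d + ηb νv * (C * (E - 1))) (Icc 0 νmax) := by
    intro x _ y _ hxy
    have hslope : 0 ≤ (1 - E) * (1 + θ * cdown * a * C) + (E - d) :=
      add_nonneg (mul_nonneg (by linarith) hfac) (by linarith)
    simp only [hηb]
    nlinarith [mul_nonneg (sub_nonneg.2 hxy) hslope]
  simp only [sellValue]
  rw [(hmono.map_isGreatest (isGreatest_Icc hν.le)).csSup_eq]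
  linear_combination (E - 1) * hCK

end OptimalLiquidation

open OptimalLiquidation in
/-- The candidate value function of the deterministic counterexample is C¹ off the kink
set `G`, a classical solution of the HJB equation there, but not differentiable on `G`. -/
theorem stmt8 (T w0 θ a cup cdown νmax : ℝ)
    (hT : 0 < T) (hw0 : 0 < w0) (hθ : 0 < θ) (ha : 0 < a)
    (hcup : 0 < cup) (hcc : cup < cdown) (hνmax : w0 / T < νmax)
    (ηb : ℝ → ℝ) (hηb : ∀ νv, ηb νv = θ * (cup - cdown * (1 + a * νv)))
    (V : ℝ × ℝ → ℝ)
    (hV : ∀ p : ℝ × ℝ, V p = (νmax / ηb νmax) *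
        (Real.exp (ηb νmax * min (p.2 / νmax) (T - p.1)) - 1))
    (G : Set (ℝ × ℝ)) (hG : G = {p : ℝ × ℝ | p.2 / νmax = T - p.1}) :
    ContDiffOn ℝ 1 V ((Set.Icc 0 T ×ˢ Set.Icc 0 w0) \ G)
    ∧ (∀ p ∈ (Set.Icc 0 T ×ˢ Set.Icc 0 w0) \ G,
        -(deriv (fun t' => V (t', p.2)) p.1)
          - sSup ((fun νv => νv - νv * deriv (fun w' => V (p.1, w')) p.2 + ηb νv * V p)
              '' Set.Icc 0 νmax) = 0)
    ∧ (∀ p ∈ G ∩ (Set.Ico 0 T ×ˢ Set.Icc 0 w0), ¬ DifferentiableAt ℝ V p) := by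
  have hν : 0 < νmax := (div_pos hw0 hT).trans hνmax
  have hK : ηb νmax < 0 := hηb νmax ▸ drift_neg hθ ha.le hcup.le hcc hν.le
  obtain rfl : V = candidate (ηb νmax) νmax T := funext hV
  subst hG
  refine ⟨fun p hp => (contDiffAt_candidate hp.2).contDiffWithinAt, ?_,
    fun p hp => not_differentiableAt_candidate hK.ne hν hp.1⟩
  rintro p ⟨⟨⟨-, ht⟩, hw, -⟩, hpG⟩
  rcases lt_or_gt_of_ne hpG with h | h
  · have hval : candidate (ηb νmax) νmax T p = sellValue (ηb νmax) νmax (p.2 / νmax) :=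
      congrArg _ (min_eq_left h.le)
    rw [deriv_candidate_time_of_lt h, deriv_candidate_inventory_of_lt hK.ne hν.ne' h, hval,
      sSup_hamiltonian hηb hθ hcc hν hK (div_nonneg hw hν.le) le_rfl]
    ring
  · have hval : candidate (ηb νmax) νmax T p = sellValue (ηb νmax) νmax (T - p.1) :=
      congrArg _ (min_eq_right h.le)
    rw [deriv_candidate_time_of_gt hK.ne h, deriv_candidate_inventory_of_gt h, hval,
      sSup_hamiltonian hηb hθ hcc hν hK (sub_nonneg.2 ht) (exp_pos _).le]
    ring
end

section
/- In the setting of the counterexample (Section 5.2), let $\phi$ be a $C^1$ function such that $V' - \phi$ has a local maximum at a point $(\bar{t}, \bar{w}) \in G = \{(t,w): w = \nu^{\max}(T-t)\}$. Then the partial derivatives of $\phi$ satisfy: $-\nu^{\max} e^{\overline{\eta}(\nu^{\max})(T-\bar{t})} \le \partial_t\phi(\bar{t},\bar{w}) \le 0$ and $0 \le \partial_w\phi(\bar{t},\bar{w}) \le e^{\overline{\eta}(\nu^{\max})\tau(\bar{w})}$, and along $G$, $(\partial_t\phi - \nu^{\max}\partial_w\phi)(\bar{t},\bar{w}) = -\nu^{\max}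 e^{\overline{\eta}(\nu^{\max})(T-\bar{t})}$. Consequently $V'$ satisfies the viscosity subsolution property $-\partial_t\phi - \sup_{\nu\in[0,\nu^{\max}]}\{\nu - \nu\,\partial_w\phi + \overline{\eta}(\nu)V'\} \le 0$ at $(\bar{t},\bar{w})$. -/
/-!
Write `V = F ∘ min (w / νmax) (T - t)` with `F x = (νmax / η) (exp (η x) - 1)`. On `G` both
arguments of the minimum equal `τ = T - t̄`, so along a line `(t̄, w̄) + r (c, d)` the value of `V`
is exactly `F (τ + r m)` with `m = min (d / νmax) (-c)` for `r ≥ 0`, and `F (τ + r M)` with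
`M = max (d / νmax) (-c)` for `r ≤ 0`. Comparing `V - φ` with its value at the local maximum on each
half-line squeezes `Dφ (c, d)` between `m F'(τ)` and `M F'(τ)`; the directions `(1, 0)`,
`(0, 1)` and the tangent `(1, -νmax)` of `G` give the three claims, and the subsolution
inequality follows by evaluating the Hamiltonian at `ν = νmax`.
-/

open Real Set Filter Topology

section LineRestriction

variable {E : Type*} [NormedAddCommGroup E] [NormedSpace ℝ E]
  {V φ : E → ℝ} {p v : E} {ψ : ℝ → ℝ} {ψ' : ℝ}

theorem mul_sub_fderiv_nonpos_of_isLocalMax_sub {s : Set ℝ} {y : ℝ}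
    (hmax : IsLocalMax (fun q => V q - φ q) p) (hφ : DifferentiableAt ℝ φ p)
    (hψ : HasDerivAt ψ ψ' 0) (h0 : (0 : ℝ) ∈ s) (hV : ∀ᶠ r in 𝓝[s] 0, V (p + r • v) = ψ r)
    (hy : y ∈ posTangentConeAt s 0) :
    y * (ψ' - fderiv ℝ φ p v) ≤ 0 := by
  have hline : Tendsto (fun r : ℝ => p + r • v) (𝓝[s] 0) (𝓝 p) := by
    have : Continuous (fun r : ℝ => p + r • v) := by fun_prop
    simpa using (this.tendsto 0).mono_left nhdsWithin_le_nhds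
  have hloc : IsLocalMaxOn (fun r => ψ r - φ (p + r • v)) s 0 := by
    filter_upwards [hline.eventually hmax, hV] with r hr hVr
    simpa [← hVr, ← hV.self_of_nhdsWithin h0] using hr
  have hu := (hψ.sub (hφ.hasFDerivAt.hasLineDerivAt v)).hasDerivWithinAt (s := s)
  simpa [mul_comm] using hloc.hasFDerivWithinAt_nonpos hu hy

theorem le_fderiv_of_isLocalMax_sub_of_eventuallyEq_nhdsGE
    (hmax : IsLocalMax (fun q => V q - φ q) p) (hφ : DifferentiableAt ℝ φ p)
    (hψ : HasDerivAt ψ ψ' 0) (hV : ∀ᶠ r in 𝓝[≥] 0, V (p + r • v) = ψ r) :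
    ψ' ≤ fderiv ℝ φ p v := by
  have h1 : (1 : ℝ) ∈ posTangentConeAt (Ici 0) 0 :=
    mem_posTangentConeAt_of_segment_subset (by simp [segment_eq_Icc, Icc_subset_Ici_self])
  linarith [mul_sub_fderiv_nonpos_of_isLocalMax_sub hmax hφ hψ self_mem_Ici hV h1]

theorem fderiv_le_of_isLocalMax_sub_of_eventuallyEq_nhdsLE
    (hmax : IsLocalMax (fun q => V q - φ q) p) (hφ : DifferentiableAt ℝ φ p)
    (hψ : HasDerivAt ψ ψ' 0) (hV : ∀ᶠ r in 𝓝[≤] 0, V (p + r • v) = ψ r) :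
    fderiv ℝ φ p v ≤ ψ' := by
  have h1 : (-1 : ℝ) ∈ posTangentConeAt (Iic 0) 0 :=
    mem_posTangentConeAt_of_segment_subset (by simp [segment_eq_Icc', Icc_subset_Iic_self])
  linarith [mul_sub_fderiv_nonpos_of_isLocalMax_sub hmax hφ hψ self_mem_Iic hV h1]

end LineRestriction

theorem min_add_mul_of_nonneg (τ α β : ℝ) {r : ℝ} (hr : 0 ≤ r) :
    min (τ + r * α) (τ + r * β) = τ + r * min α β := by
  rw [mul_min_of_nonneg _ _ hr, min_add_add_left]

theorem min_add_mul_of_nonpos (τ α β : ℝ) {r : ℝ} (hr : r ≤ 0) :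
    min (τ + r * α) (τ + r * β) = τ + r * max α β := by
  have h := smul_max_of_nonpos hr α β
  simp only [smul_eq_mul] at h
  rw [h, min_add_add_left]

theorem ContinuousLinearMap.apply_prodMk_eq (L : ℝ × ℝ →L[ℝ] ℝ) (c d : ℝ) :
    L (c, d) = c * L (1, 0) + d * L (0, 1) := by
  have h : ((c, d) : ℝ × ℝ) = c • (1, 0) + d • (0, 1) := by simp
  rw [h, map_add, map_smul, map_smul, smul_eq_mul, smul_eq_mul]

section Kink

variable {F : ℝ → ℝ} {F' ν T τ : ℝ} {V φ : ℝ × ℝ → ℝ} {t w : ℝ}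

theorem fderiv_bounds_of_isLocalMax_sub_comp_min (hF : HasDerivAt F F' τ)
    (hV : ∀ p : ℝ × ℝ, V p = F (min (p.2 / ν) (T - p.1)))
    (hw : w / ν = τ) (ht : T - t = τ) (hmax : IsLocalMax (fun p => V p - φ p) (t, w))
    (hφ : DifferentiableAt ℝ φ (t, w)) (c d : ℝ) :
    min (d / ν) (-c) * F' ≤ fderiv ℝ φ (t, w) (c, d)
      ∧ fderiv ℝ φ (t, w) (c, d) ≤ max (d / ν) (-c) * F' := by
  have hline : ∀ r : ℝ, V ((t, w) + r • (c, d)) = F (min (τ + r * (d / ν)) (τ + r * -c)) := by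
    intro r
    have h2 : ((t, w) + r • (c, d)).2 / ν = τ + r * (d / ν) := by simp [← hw]; ring
    have h1 : T - ((t, w) + r • (c, d)).1 = τ + r * -c := by simp [← ht]; ring
    rw [hV, h1, h2]
  have hderiv : ∀ m : ℝ, HasDerivAt (fun r => F (τ + r * m)) (m * F') 0 := by
    intro m
    have hF0 : HasDerivAt F F' (τ + 0 * m) := by simpa using hF
    have haff : HasDerivAt (fun r : ℝ => τ + r * m) m 0 := by
      simpa using ((hasDerivAt_id (0 : ℝ)).mul_const m).const_add τ
    exact (hF0.comp 0 haff).congr_deriv (mul_comm _ _)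
  constructor
  · refine le_fderiv_of_isLocalMax_sub_of_eventuallyEq_nhdsGE hmax hφ (hderiv _) ?_
    filter_upwards [self_mem_nhdsWithin] with r hr
    rw [hline, min_add_mul_of_nonneg _ _ _ hr]
  · refine fderiv_le_of_isLocalMax_sub_of_eventuallyEq_nhdsLE hmax hφ (hderiv _) ?_
    filter_upwards [self_mem_nhdsWithin] with r hr
    rw [hline, min_add_mul_of_nonpos _ _ _ hr]

end Kink

theorem stmt9_general (T θ a cup cdown νmax : ℝ)
    (hθ : 0 < θ) (ha : 0 < a)
    (hcup : 0 < cup) (hcc : cup < cdown) (hνmax : 0 < νmax)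
    (ηb : ℝ → ℝ) (hηb : ∀ νv, ηb νv = θ * (cup - cdown * (1 + a * νv)))
    (V : ℝ × ℝ → ℝ)
    (hV : ∀ p : ℝ × ℝ, V p = (νmax / ηb νmax) *
        (Real.exp (ηb νmax * min (p.2 / νmax) (T - p.1)) - 1))
    (tb wb : ℝ) (hwb : wb = νmax * (T - tb))
    (φ : ℝ × ℝ → ℝ) (hφ : ContDiff ℝ 1 φ)
    (hmax : IsLocalMax (fun p => V p - φ p) (tb, wb)) :
    (-(νmax * Real.exp (ηb νmax * (T - tb))) ≤ fderiv ℝ φ (tb, wb) (1, 0)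
      ∧ fderiv ℝ φ (tb, wb) (1, 0) ≤ 0)
    ∧ (0 ≤ fderiv ℝ φ (tb, wb) (0, 1)
      ∧ fderiv ℝ φ (tb, wb) (0, 1) ≤ Real.exp (ηb νmax * (wb / νmax)))
    ∧ (fderiv ℝ φ (tb, wb) (1, 0) - νmax * fderiv ℝ φ (tb, wb) (0, 1)
        = -(νmax * Real.exp (ηb νmax * (T - tb))))
    ∧ (-(fderiv ℝ φ (tb, wb) (1, 0))
        - sSup ((fun νv => νv - νv * fderiv ℝ φ (tb, wb) (0, 1) + ηb νv * V (tb, wb))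
            '' Set.Icc 0 νmax) ≤ 0) := by
  have hη : ηb νmax ≠ 0 := by
    have : cup < cdown * (1 + a * νmax) := by nlinarith [mul_pos ha hνmax]
    rw [hηb]
    exact (mul_neg_of_pos_of_neg hθ (by linarith)).ne
  set η := ηb νmax
  set E := Real.exp (η * (T - tb))
  have hwT : wb / νmax = T - tb := by rw [hwb]; field_simp
  have hF : HasDerivAt (fun x => νmax / η * (Real.exp (η * x) - 1)) (νmax * E) (T - tb) := by
    refine ((((hasDerivAt_id' (T - tb)).const_mul η).exp.sub_const 1).const_mul
      (νmax / η)).congr_deriv ?_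
    field_simp
    rfl
  have hD := fderiv_bounds_of_isLocalMax_sub_comp_min hF hV hwT rfl hmax
    ((hφ.differentiable one_ne_zero) _)
  obtain ⟨hA₁, hA₂⟩ := hD 1 0
  obtain ⟨hB₁, hB₂⟩ := hD 0 1
  obtain ⟨hG₁, hG₂⟩ := hD 1 (-νmax)
  rw [ContinuousLinearMap.apply_prodMk_eq] at hG₁ hG₂
  norm_num [hνmax.ne', hνmax.le] at hA₁ hA₂ hB₁ hB₂ hG₁ hG₂
  set A := fderiv ℝ φ (tb, wb) (1, 0)
  set B := fderiv ℝ φ (tb, wb) (0, 1)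
  have htan : A - νmax * B = -(νmax * E) := by linarith
  refine ⟨⟨hA₁, hA₂⟩, ⟨hB₁, hwT ▸ hB₂⟩, htan, ?_⟩
  have hVb : V (tb, wb) = νmax / η * (E - 1) := by simp [hV, hwT, E]
  have hηb_cont : Continuous ηb := by rw [funext hηb]; fun_prop
  have hsup := ContinuousOn.le_sSup_image_Icc (f := fun νv => νv - νv * B + ηb νv * V (tb, wb))
    (by fun_prop) ⟨hνmax.le, le_rfl⟩
  have hval : νmax - νmax * B + η * V (tb, wb) = -A := by
    rw [hVb]; field_simp; linarith
  linarith

/-- Viscosity subsolution property of the candidate value function at points of the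
kink set `G`, together with the derivative bounds for test functions. -/
theorem stmt9 (T θ a cup cdown νmax : ℝ)
    (hT : 0 < T) (hθ : 0 < θ) (ha : 0 < a)
    (hcup : 0 < cup) (hcc : cup < cdown) (hνmax : 0 < νmax)
    (ηb : ℝ → ℝ) (hηb : ∀ νv, ηb νv = θ * (cup - cdown * (1 + a * νv)))
    (V : ℝ × ℝ → ℝ)
    (hV : ∀ p : ℝ × ℝ, V p = (νmax / ηb νmax) *
        (Real.exp (ηb νmax * min (p.2 / νmax) (T - p.1)) - 1))
    (tb wb : ℝ) (htb : tb ∈ Set.Ioo 0 T) (hwb : wb = νmax * (T - tb))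
    (φ : ℝ × ℝ → ℝ) (hφ : ContDiff ℝ 1 φ)
    (hmax : IsLocalMax (fun p => V p - φ p) (tb, wb)) :
    (-(νmax * Real.exp (ηb νmax * (T - tb))) ≤ fderiv ℝ φ (tb, wb) (1, 0)
      ∧ fderiv ℝ φ (tb, wb) (1, 0) ≤ 0)
    ∧ (0 ≤ fderiv ℝ φ (tb, wb) (0, 1)
      ∧ fderiv ℝ φ (tb, wb) (0, 1) ≤ Real.exp (ηb νmax * (wb / νmax)))
    ∧ (fderiv ℝ φ (tb, wb) (1, 0) - νmax * fderiv ℝ φ (tb, wb) (0, 1)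
        = -(νmax * Real.exp (ηb νmax * (T - tb))))
    ∧ (-(fderiv ℝ φ (tb, wb) (1, 0))
        - sSup ((fun νv => νv - νv * fderiv ℝ φ (tb, wb) (0, 1) + ηb νv * V (tb, wb))
            '' Set.Icc 0 νmax) ≤ 0) :=
  stmt9_general T θ a cup cdown νmax hθ ha hcup hcc hνmax ηb hηb V hV tb wb hwb φ hφ hmax
end

section
/- The function $V'^{,\infty}(w) = -\frac{1}{\theta c^{\text{down}} a}(e^{-w\theta a c^{\text{down}}} - 1)$ (independent of $t$) is a strict classical supersolution of the HJB equation $-\partial_t V - \sup_{\nu \in [0,\nu^{\max}]}\{\nu - \nu\,\partial_w V + \overline{\eta}(\nu)V\} = 0$ for every finite $\nu^{\max}$, where $\overline{\eta}(\nu) = \theta(c^{\text{up}} - c^{\text{down}}(1+a\nu))$ with $0 < c^{\text{up}} < c^{\text{down}}$, $w > 0$. -/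
/-!
The Hamiltonian is linear in `ν`, and its slope `1 - V'(w) - θ c_down a V(w)` vanishes because
`V(w) = (1 - e^{-k w}) / k` with `k = θ c_down a` solves `V' = 1 - k V`. Hence the supremum over
`[0, ν_max]` equals the value at `ν = 0`, namely `θ (c_up - c_down) V(w)`, which is negative since
`V(w) > 0` for `w > 0`.
-/

open Real Set

theorem hasDerivAt_one_sub_exp_neg_mul_div {k : ℝ} (hk : k ≠ 0) (x : ℝ) :
    HasDerivAt (fun y => (1 - exp (-(k * y))) / k) (exp (-(k * x))) x := by
  have h : HasDerivAt (fun y => -(k * y)) (-k) x := by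
    simpa using ((hasDerivAt_id x).const_mul k).fun_neg
  refine ((h.exp.const_sub 1).div_const k).congr_deriv ?_
  field_simp

theorem one_sub_exp_neg_mul_div_pos {k x : ℝ} (hk : k ≠ 0) (hx : 0 < x) :
    0 < (1 - exp (-(k * x))) / k := by
  rcases hk.lt_or_gt with hk | hk
  · refine div_pos_of_neg_of_neg ?_ hk
    simpa using mul_neg_of_neg_of_pos hk hx
  · refine div_pos ?_ hk
    simpa using mul_pos hk hx

/-- `V'^{,∞}` is a strict classical supersolution of the HJB equation for every
finite `νmax`: since `∂_t V'^{,∞} = 0`, this says that the Hamiltonian supremum is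
strictly negative for `w > 0`. -/
theorem stmt11 (θ a cup cdown νmax w : ℝ)
    (hθ : 0 < θ) (ha : 0 < a) (hcup : 0 < cup) (hcc : cup < cdown)
    (hνmax : 0 ≤ νmax) (hw : 0 < w)
    (V : ℝ → ℝ)
    (hV : ∀ x, V x = -(1 / (θ * cdown * a)) * (Real.exp (-(x * θ * a * cdown)) - 1)) :
    sSup ((fun νv => νv - νv * deriv V w + θ * (cup - cdown * (1 + a * νv)) * V w)
        '' Set.Icc 0 νmax) < 0 := by
  set k := θ * cdown * a
  have hk : k ≠ 0 := (mul_pos (mul_pos hθ (hcup.trans hcc)) ha).ne'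
  have hV_eq : V = fun x => (1 - exp (-(k * x))) / k := by
    funext x
    rw [hV, show x * θ * a * cdown = k * x by ring]
    ring
  have hV_pos : 0 < V w := hV_eq ▸ one_sub_exp_neg_mul_div_pos hk hw
  have hV_ode : deriv V w = 1 - k * V w := by
    rw [hV_eq, (hasDerivAt_one_sub_exp_neg_mul_div hk w).deriv]
    field_simp
    ring
  have hH : (fun ν => ν - ν * deriv V w + θ * (cup - cdown * (1 + a * ν)) * V w) =
      fun _ => θ * (cup - cdown) * V w := by
    funext ν
    rw [hV_ode]
    ring
  rw [hH, (nonempty_Icc.2 hνmax).image_const, csSup_singleton]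
  exact mul_neg_of_neg_of_pos (mul_neg_of_pos_of_neg hθ (sub_neg.2 hcc)) hV_pos
end
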